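/- arXiv:2101.11455 — 2 statements merged into one kernel-verified Lean document; each statement's English description precedes it below -/
import Mathlib

section
/- Weighted Poincaré inequality, L² version (Lemma 3.2, first inequality). Let M = c e^{−U} be a Maxwellian weight on ℝ³ with ∫ M dq < ∞ satisfying the weighted Poincaré hypothesis with constant λ₀ > 0. Then there exists a constant C, depending only on M and λ₀, such that for every smooth f : ℝ³_x × ℝ³_q → ℝ for which all the integrals below are finite, ∬_{ℝ³×ℝ³} |f(x,q)|² dq dx ≤ C ( ∬ |∇_q(f/√M)|² M dq dx + ∫_{ℝ³} |ρ(x)|² dx ), where ρ(x) = ∫_{ℝ³} f(x,q) √(M(q)) dq. -/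
noncomputable section

open MeasureTheory Real Set Filter

/-- Points of three-dimensional space. -/
abbrev V3 : Type := Fin 3 → ℝ

/-- Partial derivative of a scalar field in the `i`-th coordinate direction. -/
def pd (i : Fin 3) (f : V3 → ℝ) : V3 → ℝ := fun x => fderiv ℝ f x (Pi.single i 1)

/-- Iterated partial derivatives along a list of coordinate directions. -/
def pdL : List (Fin 3) → (V3 → ℝ) → V3 → ℝ
  | [], f => f
  | i :: l, f => pd i (pdL l f)

/-- Squared Euclidean magnitude of a vector. -/
def nsq (v : V3) : ℝ := ∑ i, (v i) ^ 2

/-- Squared Euclidean magnitude of the gradient of a scalar field. -/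
def gradsq (f : V3 → ℝ) (x : V3) : ℝ := ∑ i, (pd i f x) ^ 2

/-- Laplacian of a scalar field. -/
def lap (f : V3 → ℝ) (x : V3) : ℝ := ∑ i, pd i (pd i f) x

/-- Iterated `x`-derivatives of a function of `(x, q)`. -/
def pdLx (l : List (Fin 3)) (f : V3 → V3 → ℝ) : V3 → V3 → ℝ := fun x q => pdL l (fun y => f y q) x

/-- Iterated `q`-derivatives of a function of `(x, q)`. -/
def pdLq (l : List (Fin 3)) (f : V3 → V3 → ℝ) : V3 → V3 → ℝ := fun x q => pdL l (f x) q

/-- Single `q`-derivative of a function of `(x, q)`. -/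
def pdq (i : Fin 3) (f : V3 → V3 → ℝ) : V3 → V3 → ℝ := fun x q => pd i (f x) q

/-- weighted Poincaré inequality, `L²` version (Lemma 3.2, first inequality):
`∬ |f|² dq dx ≤ C ( ∬ |∇_q(f/√M)|² M dq dx + ∫ |ρ|² dx )` with `ρ(x) = ∫ f √M dq`. -/
theorem weighted_poincare_L2
    (U : V3 → ℝ) (hU : ContDiff ℝ (⊤ : ℕ∞) U) (c : ℝ) (hc : 0 < c)
    (M : V3 → ℝ) (hM : ∀ q, M q = c * Real.exp (-U q)) (hMint : Integrable M)
    (lam0 : ℝ) (hlam0 : 0 < lam0)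
    (hpoinc : ∀ h : V3 → ℝ, ContDiff ℝ (⊤ : ℕ∞) h →
      Integrable (fun q => h q * M q) →
      Integrable (fun q => (h q) ^ 2 * M q) →
      Integrable (fun q => gradsq h q * M q) →
      lam0 * ∫ q : V3, (h q - (∫ w : V3, h w * M w) / (∫ w : V3, M w)) ^ 2 * M q
        ≤ ∫ q : V3, gradsq h q * M q) :
    ∃ C : ℝ, 0 < C ∧ ∀ f : V3 → V3 → ℝ,
      ContDiff ℝ (⊤ : ℕ∞) (fun z : V3 × V3 => f z.1 z.2) →
      Integrable (fun z : V3 × V3 => (f z.1 z.2) ^ 2) →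
      Integrable (fun z : V3 × V3 =>
        gradsq (fun w => f z.1 w / Real.sqrt (M w)) z.2 * M z.2) →
      (∀ x, Integrable (fun q => f x q * Real.sqrt (M q))) →
      Integrable (fun x => (∫ q : V3, f x q * Real.sqrt (M q)) ^ 2) →
      (∫ x : V3, ∫ q : V3, (f x q) ^ 2) ≤
        C * ((∫ x : V3, ∫ q : V3, gradsq (fun w => f x w / Real.sqrt (M w)) q * M q)
          + ∫ x : V3, (∫ q : V3, f x q * Real.sqrt (M q)) ^ 2) := by
  classical
  have hMpos : ∀ q, 0 < M q := fun q => by rw [hM q]; positivity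
  have hIM : 0 < ∫ q : V3, M q := by
    rw [integral_pos_iff_support_of_nonneg (fun q => (hMpos q).le) hMint]
    have hs : Function.support M = Set.univ := by
      ext q; simp [Function.mem_support, (hMpos q).ne']
    rw [hs]
    exact isOpen_univ.measure_pos volume ⟨fun _ => 0, trivial⟩
  set IM : ℝ := ∫ q : V3, M q with hIMdef
  refine ⟨1 / lam0 + 1 / IM, by positivity, ?_⟩
  intro f hf hf2 hgrad hρint hρ2
  -- pointwise (in x) main estimate
  have key : ∀ x : V3, Integrable (fun q => (f x q) ^ 2) →
      Integrable (fun q => gradsq (fun w => f x w / Real.sqrt (M w)) q * M q) →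
      (∫ q : V3, (f x q) ^ 2) ≤ (1 / lam0 + 1 / IM) *
        ((∫ q : V3, gradsq (fun w => f x w / Real.sqrt (M w)) q * M q)
          + (∫ q : V3, f x q * Real.sqrt (M q)) ^ 2) := by
    intro x hI2 hIg
    set h : V3 → ℝ := fun q => f x q / Real.sqrt (M q) with hh
    have hhM : ∀ q, h q * M q = f x q * Real.sqrt (M q) := by
      intro q
      rw [hh]
      rw [div_mul_eq_mul_div, mul_div_assoc, Real.div_sqrt]
    have hh2M : ∀ q, (h q) ^ 2 * M q = (f x q) ^ 2 := by
      intro q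
      rw [hh]
      simp only
      rw [div_pow, Real.sq_sqrt (hMpos q).le, div_mul_cancel₀ _ (hMpos q).ne']
    have hsmooth : ContDiff ℝ (⊤ : ℕ∞) h := by
      have hfx : ContDiff ℝ (⊤ : ℕ∞) (fun q => f x q) :=
        by have := hf.comp (ContDiff.prodMk (contDiff_const (c := x)) contDiff_id); exact this
      have hrepr : h = fun q => f x q * ((Real.sqrt c)⁻¹ * Real.exp (U q / 2)) := by
        funext q
        rw [hh]
        simp only
        rw [hM q, Real.sqrt_mul hc.le, ← Real.exp_half, div_eq_mul_inv, mul_inv,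
          neg_div, Real.exp_neg, inv_inv]
      rw [hrepr]
      exact hfx.mul (contDiff_const.mul (Real.contDiff_exp.comp (hU.div_const 2)))
    have hintM : Integrable (fun q => h q * M q) := by
      have : (fun q => h q * M q) = fun q => f x q * Real.sqrt (M q) := funext hhM
      rw [this]; exact hρint x
    have hint2 : Integrable (fun q => (h q) ^ 2 * M q) := by
      have : (fun q => (h q) ^ 2 * M q) = fun q => (f x q) ^ 2 := funext hh2M
      rw [this]; exact hI2
    have hpo := hpoinc h hsmooth hintM hint2 hIg
    set a : ℝ := (∫ w : V3, h w * M w) / IM with ha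
    set X : ℝ := ∫ q : V3, (h q - a) ^ 2 * M q with hX
    set G : ℝ := ∫ q : V3, gradsq h q * M q with hG
    set ρ : ℝ := ∫ q : V3, f x q * Real.sqrt (M q) with hρ
    have hρeq : (∫ w : V3, h w * M w) = ρ := by
      rw [hρ]; exact integral_congr_ae (Filter.Eventually.of_forall fun q => hhM q)
    have haρ : a = ρ / IM := by rw [ha, hρeq]
    -- expand X
    have hexp : (fun q => (h q - a) ^ 2 * M q)
        = fun q => ((h q) ^ 2 * M q - (2 * a) * (h q * M q)) + a ^ 2 * M q := by
      funext q; ring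
    have hsub : Integrable (fun q => (h q) ^ 2 * M q - 2 * a * (h q * M q)) :=
      hint2.sub (hintM.const_mul (2 * a))
    have hXeq : X = (∫ q : V3, (h q) ^ 2 * M q) - 2 * a * (∫ w : V3, h w * M w)
        + a ^ 2 * IM := by
      rw [hX, hexp, integral_add hsub (hMint.const_mul (a ^ 2)),
        integral_sub hint2 (hintM.const_mul (2 * a)),
        integral_const_mul, integral_const_mul, hIMdef]
    have hf2eq : (∫ q : V3, (f x q) ^ 2) = ∫ q : V3, (h q) ^ 2 * M q :=
      (integral_congr_ae (Filter.Eventually.of_forall fun q => hh2M q)).symm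
    have hXnn : 0 ≤ X :=
      integral_nonneg fun q => mul_nonneg (sq_nonneg _) (hMpos q).le
    have hGnn : 0 ≤ G :=
      integral_nonneg fun q => mul_nonneg
        (Finset.sum_nonneg fun i _ => sq_nonneg _) (hMpos q).le
    have hmain : (∫ q : V3, (f x q) ^ 2) = X + (1 / IM) * ρ ^ 2 := by
      rw [hf2eq, hXeq, hρeq, haρ]
      field_simp
      ring
    have hXle : X ≤ (1 / lam0) * G := by
      rw [div_mul_eq_mul_div, le_div_iff₀ hlam0]
      linarith [hpo]
    have hexpand : (1 / lam0 + 1 / IM) * (G + ρ ^ 2)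
        = (1 / lam0) * G + (1 / IM) * ρ ^ 2 + ((1 / lam0) * ρ ^ 2 + (1 / IM) * G) := by
      ring
    have h1 : 0 ≤ (1 / lam0) * ρ ^ 2 := by positivity
    have h2 : 0 ≤ (1 / IM) * G := mul_nonneg (by positivity) hGnn
    rw [hmain]
    linarith
  -- Fubini pieces
  rw [Measure.volume_eq_prod V3 V3] at hf2 hgrad
  have hae2 := hf2.prod_right_ae
  have haeg := hgrad.prod_right_ae
  have hint1 : Integrable (fun x => ∫ q : V3, (f x q) ^ 2) := hf2.integral_prod_left
  have hintg : Integrable (fun x =>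
      ∫ q : V3, gradsq (fun w => f x w / Real.sqrt (M w)) q * M q) :=
    hgrad.integral_prod_left
  have hmono : ∀ᵐ x : V3, (∫ q : V3, (f x q) ^ 2) ≤ (1 / lam0 + 1 / IM) *
      ((∫ q : V3, gradsq (fun w => f x w / Real.sqrt (M w)) q * M q)
        + (∫ q : V3, f x q * Real.sqrt (M q)) ^ 2) := by
    filter_upwards [hae2, haeg] with x h1 h2
    exact key x h1 h2
  have hRHSint : Integrable (fun x => (1 / lam0 + 1 / IM) *
      ((∫ q : V3, gradsq (fun w => f x w / Real.sqrt (M w)) q * M q)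
        + (∫ q : V3, f x q * Real.sqrt (M q)) ^ 2)) := (hintg.add hρ2).const_mul _
  calc (∫ x : V3, ∫ q : V3, (f x q) ^ 2)
      ≤ ∫ x : V3, (1 / lam0 + 1 / IM) *
          ((∫ q : V3, gradsq (fun w => f x w / Real.sqrt (M w)) q * M q)
            + (∫ q : V3, f x q * Real.sqrt (M q)) ^ 2) :=
        integral_mono_ae hint1 hRHSint hmono
    _ = (1 / lam0 + 1 / IM) *
          ((∫ x : V3, ∫ q : V3, gradsq (fun w => f x w / Real.sqrt (M w)) q * M q)
            + ∫ x : V3, (∫ q : V3, f x q * Real.sqrt (M q)) ^ 2) := by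
        rw [integral_const_mul, integral_add hintg hρ2]
end
end

section
/- First and second variation of the dissipation функционal at the global equilibrium (equations before and at (eq:dissip-2deri)). Assume k₁ = k₂ = 1 and M_A = M_B², and define for positive Ψ_A, Ψ_B the dissipation functional D(u, Ψ_A, Ψ_B) = ∫ μ|∇_x u|² dx + λ Σ_{α=A,B} ∬ Ψ_α |∇_q ln(Ψ_α/M_α)|² dq dx + λ ∬ (Ψ_A − Ψ_B²) ln(Ψ_A/Ψ_B²) dq dx. Then D(0, M_A, M_B) = 0, and for all smooth compactly supported perturbations v : ℝ³ → ℝ³ and ψ_A, ψ_B : ℝ³×ℝ³ → ℝ (such that M_α + εψ_α > 0 for small |ε|), the function φ(ε) = D(εv, M_A + εψ_A, M_B + εψ_B) satisfies φ'(0) = 0 and φ''(0) = 2∫ μ|∇_x v|² dx + 2λ Σ_{α=A,B} ∬ |∇_q(ψ_α/M_α)|² M_α dq dx + 2λ ∬ (ψ_A/√(M_A) − 2ψ_B)² dq dx ≥ 0. In particular the global equilibrium (0, M_A, M_B) is a critical point of D and the second variation is nonnegative. -/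
noncomputable section

open MeasureTheory Real Set Filter

open Topology

/-- The dissipation functional of the two-species micro-macro model with
`k₁ = k₂ = 1` and `M_A = M_B²`. -/
def Diss (μ lam : ℝ) (MA MB : V3 → ℝ) (u : V3 → V3) (PA PB : V3 → V3 → ℝ) : ℝ :=
  (∫ x : V3, μ * ∑ j, ∑ k, (pd k (fun y => u y j) x) ^ 2)
  + lam * (∫ x : V3, ∫ q : V3,
      (PA x q * ∑ j, (pd j (fun w => Real.log (PA x w / MA w)) q) ^ 2
        + PB x q * ∑ j, (pd j (fun w => Real.log (PB x w / MB w)) q) ^ 2))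
  + lam * (∫ x : V3, ∫ q : V3,
      (PA x q - (PB x q) ^ 2) * Real.log (PA x q / (PB x q) ^ 2))

/-! ### Auxiliary elementary calculus lemmas -/

def f0 (A B a b c d t : ℝ) : ℝ :=
  (t^2 * (A / (1 + t*a)) + t^2 * (B / (1 + t*b)))
    + (t*c - t^2*d) * (Real.log (1 + t*a) - 2 * Real.log (1 + t*b))

def f1 (A B a b c d t : ℝ) : ℝ :=
  ((2*t*(A/(1+t*a)) - t^2*(A*a/(1+t*a)^2)) + (2*t*(B/(1+t*b)) - t^2*(B*b/(1+t*b)^2)))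
  + ((c - 2*t*d) * (Real.log (1+t*a) - 2 * Real.log (1+t*b))
      + (t*c - t^2*d) * (a/(1+t*a) - 2*(b/(1+t*b))))

def f2 (A B a b c d t : ℝ) : ℝ :=
  ((2*(A/(1+t*a)) - 4*t*(A*a/(1+t*a)^2) + 2*t^2*(A*a^2/(1+t*a)^3))
   + (2*(B/(1+t*b)) - 4*t*(B*b/(1+t*b)^2) + 2*t^2*(B*b^2/(1+t*b)^3)))
  + ((-(2*d) * (Real.log (1+t*a) - 2*Real.log (1+t*b))
        + (c-2*t*d) * (a/(1+t*a) - 2*(b/(1+t*b))))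
   + ((c-2*t*d) * (a/(1+t*a) - 2*(b/(1+t*b)))
        + (t*c-t^2*d) * (-(a^2/(1+t*a)^2) + 2*(b^2/(1+t*b)^2))))

lemma f0_zero (t : ℝ) : f0 0 0 0 0 0 0 t = 0 := by simp [f0]
lemma f1_zero (t : ℝ) : f1 0 0 0 0 0 0 t = 0 := by simp [f1]
lemma f2_zero (t : ℝ) : f2 0 0 0 0 0 0 t = 0 := by simp [f2]
lemma f1_at0 (A B a b c d : ℝ) : f1 A B a b c d 0 = 0 := by simp [f1]
lemma f2_at0 (A B a b c d : ℝ) : f2 A B a b c d 0 = 2*A + 2*B + 2*(c*(a - 2*b)) := by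
  simp [f2]; ring

lemma pP (A a t : ℝ) (ha : (1:ℝ) + t*a ≠ 0) :
    HasDerivAt (fun s : ℝ => s^2 * (A / (1 + s*a)))
      (2*t*(A/(1+t*a)) - t^2*(A*a/(1+t*a)^2)) t := by
  have hu : HasDerivAt (fun s : ℝ => 1 + s*a) a t := by
    simpa using ((hasDerivAt_id t).mul_const a).const_add 1
  have hAdiv : HasDerivAt (fun s => A / (1 + s*a)) ((0 * (1+t*a) - A * a)/(1+t*a)^2) t :=
    (hasDerivAt_const t A).div hu ha
  refine ((hasDerivAt_pow 2 t).mul hAdiv).congr_deriv ?_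
  field_simp
  ring

lemma pA (A a t : ℝ) (ha : (1:ℝ) + t*a ≠ 0) :
    HasDerivAt (fun s => 2*s * (A / (1 + s*a)) - s^2 * (A*a / (1 + s*a)^2))
      (2*(A/(1+t*a)) - 4*t*(A*a/(1+t*a)^2) + 2*t^2*(A*a^2/(1+t*a)^3)) t := by
  have hu : HasDerivAt (fun s : ℝ => 1 + s*a) a t := by
    simpa using ((hasDerivAt_id t).mul_const a).const_add 1
  have hAdiv : HasDerivAt (fun s => A / (1 + s*a)) ((0 * (1+t*a) - A * a)/(1+t*a)^2) t :=
    (hasDerivAt_const t A).div hu ha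
  have hu2 : HasDerivAt (fun s : ℝ => (1 + s*a)^2) (2*(1+t*a)^1*a) t := by
    simpa using hu.fun_pow 2
  have hAa : HasDerivAt (fun s => A*a / (1 + s*a)^2)
      ((0 * (1+t*a)^2 - (A*a) * (2*(1+t*a)^1*a))/((1+t*a)^2)^2) t :=
    (hasDerivAt_const t (A*a)).div hu2 (pow_ne_zero _ ha)
  have h := (((hasDerivAt_id t).const_mul 2).mul hAdiv).sub ((hasDerivAt_pow 2 t).mul hAa)
  refine h.congr_deriv ?_
  simp only [id_eq]
  field_simp
  ring

lemma pLd (a b t : ℝ) (ha : (1:ℝ) + t*a ≠ 0) (hb : (1:ℝ) + t*b ≠ 0) :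
    HasDerivAt (fun s : ℝ => a/(1+s*a) - 2 * (b/(1+s*b)))
      (-(a^2/(1+t*a)^2) + 2*(b^2/(1+t*b)^2)) t := by
  have hu : HasDerivAt (fun s : ℝ => 1 + s*a) a t := by
    simpa using ((hasDerivAt_id t).mul_const a).const_add 1
  have hw : HasDerivAt (fun s : ℝ => 1 + s*b) b t := by
    simpa using ((hasDerivAt_id t).mul_const b).const_add 1
  have h1 : HasDerivAt (fun s => a / (1 + s*a)) ((0 * (1+t*a) - a * a)/(1+t*a)^2) t :=
    (hasDerivAt_const t a).div hu ha
  have h2 : HasDerivAt (fun s => b / (1 + s*b)) ((0 * (1+t*b) - b * b)/(1+t*b)^2) t :=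
    (hasDerivAt_const t b).div hw hb
  refine (h1.sub (h2.const_mul 2)).congr_deriv ?_
  field_simp
  ring

lemma pL (a b t : ℝ) (ha : (1:ℝ) + t*a ≠ 0) (hb : (1:ℝ) + t*b ≠ 0) :
    HasDerivAt (fun s : ℝ => Real.log (1+s*a) - 2 * Real.log (1+s*b))
      (a/(1+t*a) - 2 * (b/(1+t*b))) t := by
  have hu : HasDerivAt (fun s : ℝ => 1 + s*a) a t := by
    simpa using ((hasDerivAt_id t).mul_const a).const_add 1
  have hw : HasDerivAt (fun s : ℝ => 1 + s*b) b t := by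
    simpa using ((hasDerivAt_id t).mul_const b).const_add 1
  have h1 := hu.log ha
  have h2 := (hw.log hb).const_mul 2
  simpa [div_eq_mul_inv, mul_comm] using h1.fun_sub h2

lemma pS (c d t : ℝ) : HasDerivAt (fun s : ℝ => s*c - s^2*d) (c - 2*t*d) t := by
  have := ((hasDerivAt_id t).mul_const c).fun_sub ((hasDerivAt_pow 2 t).mul_const d)
  simpa using this.congr_deriv (by ring)

lemma pS2 (c d t : ℝ) : HasDerivAt (fun s : ℝ => c - 2*s*d) (-(2*d)) t := by
  simpa using (hasDerivAt_const t c).fun_sub (((hasDerivAt_id t).const_mul 2).mul_const d)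

lemma hd1 (A B a b c d t : ℝ) (ha : 0 < 1 + t*a) (hb : 0 < 1 + t*b) :
    HasDerivAt (fun s => f0 A B a b c d s) (f1 A B a b c d t) t := by
  unfold f0 f1
  exact ((pP A a t ha.ne').add (pP B b t hb.ne')).add ((pS c d t).mul (pL a b t ha.ne' hb.ne'))

lemma hd2 (A B a b c d t : ℝ) (ha : 0 < 1 + t*a) (hb : 0 < 1 + t*b) :
    HasDerivAt (fun s => f1 A B a b c d s) (f2 A B a b c d t) t := by
  unfold f1 f2
  exact ((pA A a t ha.ne').add (pA B b t hb.ne')).add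
    (((pS2 c d t).mul (pL a b t ha.ne' hb.ne')).add
      ((pS c d t).mul (pLd a b t ha.ne' hb.ne')))

/-! ### Continuity of the composed integrands -/

lemma contOn_all {Z : Type*} [TopologicalSpace Z] (r : ℝ) (A B a b c d : Z → ℝ)
    (hA : Continuous A) (hB : Continuous B) (ha : Continuous a) (hb : Continuous b)
    (hc : Continuous c) (hd : Continuous d)
    (hpos : ∀ (t : ℝ) (z : Z), t ∈ Icc (-r) r → 0 < 1 + t * a z ∧ 0 < 1 + t * b z) :
    ContinuousOn (fun p : ℝ × Z => f0 (A p.2) (B p.2) (a p.2) (b p.2) (c p.2) (d p.2) p.1)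
      (Icc (-r) r ×ˢ univ) ∧
    ContinuousOn (fun p : ℝ × Z => f1 (A p.2) (B p.2) (a p.2) (b p.2) (c p.2) (d p.2) p.1)
      (Icc (-r) r ×ˢ univ) ∧
    ContinuousOn (fun p : ℝ × Z => f2 (A p.2) (B p.2) (a p.2) (b p.2) (c p.2) (d p.2) p.1)
      (Icc (-r) r ×ˢ univ) := by
  set s : Set (ℝ × Z) := Icc (-r) r ×ˢ univ with hs
  have hUne : ∀ p ∈ s, (1 : ℝ) + p.1 * a p.2 ≠ 0 := fun p hp => (hpos p.1 p.2 hp.1).1.ne'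
  have hWne : ∀ p ∈ s, (1 : ℝ) + p.1 * b p.2 ≠ 0 := fun p hp => (hpos p.1 p.2 hp.1).2.ne'
  have hU : ContinuousOn (fun p : ℝ × Z => 1 + p.1 * a p.2) s :=
    (continuous_const.add (continuous_fst.mul (ha.comp continuous_snd))).continuousOn
  have hW : ContinuousOn (fun p : ℝ × Z => 1 + p.1 * b p.2) s :=
    (continuous_const.add (continuous_fst.mul (hb.comp continuous_snd))).continuousOn
  have cA : ContinuousOn (fun p : ℝ × Z => A p.2) s := (hA.comp continuous_snd).continuousOn
  have cB : ContinuousOn (fun p : ℝ × Z => B p.2) s := (hB.comp continuous_snd).continuousOn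
  have ca : ContinuousOn (fun p : ℝ × Z => a p.2) s := (ha.comp continuous_snd).continuousOn
  have cb : ContinuousOn (fun p : ℝ × Z => b p.2) s := (hb.comp continuous_snd).continuousOn
  have cc : ContinuousOn (fun p : ℝ × Z => c p.2) s := (hc.comp continuous_snd).continuousOn
  have cd : ContinuousOn (fun p : ℝ × Z => d p.2) s := (hd.comp continuous_snd).continuousOn
  have ct : ContinuousOn (fun p : ℝ × Z => p.1) s := continuousOn_fst
  have hUne2 : ∀ p ∈ s, ((1 : ℝ) + p.1 * a p.2)^2 ≠ 0 := fun p hp => pow_ne_zero _ (hUne p hp)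
  have hWne2 : ∀ p ∈ s, ((1 : ℝ) + p.1 * b p.2)^2 ≠ 0 := fun p hp => pow_ne_zero _ (hWne p hp)
  have hUne3 : ∀ p ∈ s, ((1 : ℝ) + p.1 * a p.2)^3 ≠ 0 := fun p hp => pow_ne_zero _ (hUne p hp)
  have hWne3 : ∀ p ∈ s, ((1 : ℝ) + p.1 * b p.2)^3 ≠ 0 := fun p hp => pow_ne_zero _ (hWne p hp)
  have hlogU : ContinuousOn (fun p : ℝ × Z => Real.log (1 + p.1 * a p.2)) s := hU.log hUne
  have hlogW : ContinuousOn (fun p : ℝ × Z => Real.log (1 + p.1 * b p.2)) s := hW.log hWne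
  have hL : ContinuousOn
      (fun p : ℝ × Z => Real.log (1 + p.1 * a p.2) - 2 * Real.log (1 + p.1 * b p.2)) s :=
    hlogU.sub (continuousOn_const.mul hlogW)
  have hAu : ContinuousOn (fun p : ℝ × Z => A p.2 / (1 + p.1 * a p.2)) s := cA.div hU hUne
  have hBw : ContinuousOn (fun p : ℝ × Z => B p.2 / (1 + p.1 * b p.2)) s := cB.div hW hWne
  have hAau2 : ContinuousOn (fun p : ℝ × Z => A p.2 * a p.2 / (1 + p.1 * a p.2)^2) s :=
    (cA.mul ca).div (hU.pow 2) hUne2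
  have hBbw2 : ContinuousOn (fun p : ℝ × Z => B p.2 * b p.2 / (1 + p.1 * b p.2)^2) s :=
    (cB.mul cb).div (hW.pow 2) hWne2
  have hAa2u3 : ContinuousOn (fun p : ℝ × Z => A p.2 * (a p.2)^2 / (1 + p.1 * a p.2)^3) s :=
    (cA.mul (ca.pow 2)).div (hU.pow 3) hUne3
  have hBb2w3 : ContinuousOn (fun p : ℝ × Z => B p.2 * (b p.2)^2 / (1 + p.1 * b p.2)^3) s :=
    (cB.mul (cb.pow 2)).div (hW.pow 3) hWne3
  have hau : ContinuousOn (fun p : ℝ × Z => a p.2 / (1 + p.1 * a p.2)) s := ca.div hU hUne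
  have hbw : ContinuousOn (fun p : ℝ × Z => b p.2 / (1 + p.1 * b p.2)) s := cb.div hW hWne
  have hLd : ContinuousOn
      (fun p : ℝ × Z => a p.2 / (1 + p.1 * a p.2) - 2 * (b p.2 / (1 + p.1 * b p.2))) s :=
    hau.sub (continuousOn_const.mul hbw)
  have ha2u2 : ContinuousOn (fun p : ℝ × Z => (a p.2)^2 / (1 + p.1 * a p.2)^2) s :=
    (ca.pow 2).div (hU.pow 2) hUne2
  have hb2w2 : ContinuousOn (fun p : ℝ × Z => (b p.2)^2 / (1 + p.1 * b p.2)^2) s :=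
    (cb.pow 2).div (hW.pow 2) hWne2
  have hS : ContinuousOn (fun p : ℝ × Z => p.1 * c p.2 - p.1^2 * d p.2) s :=
    (ct.mul cc).sub ((ct.pow 2).mul cd)
  have hS2 : ContinuousOn (fun p : ℝ × Z => c p.2 - 2 * p.1 * d p.2) s :=
    cc.sub (((continuousOn_const.mul ct)).mul cd)
  refine ⟨?_, ?_, ?_⟩
  · unfold f0
    exact (((ct.pow 2).mul hAu).add ((ct.pow 2).mul hBw)).add (hS.mul hL)
  · unfold f1
    exact ((((continuousOn_const.mul ct).mul hAu).sub ((ct.pow 2).mul hAau2)).add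
      (((continuousOn_const.mul ct).mul hBw).sub ((ct.pow 2).mul hBbw2))).add
      ((hS2.mul hL).add (hS.mul hLd))
  · unfold f2
    exact ((((continuousOn_const.mul hAu).sub
              (((continuousOn_const.mul ct)).mul hAau2)).add
              ((continuousOn_const.mul (ct.pow 2)).mul hAa2u3)).add
           (((continuousOn_const.mul hBw).sub
              (((continuousOn_const.mul ct)).mul hBbw2)).add
              ((continuousOn_const.mul (ct.pow 2)).mul hBb2w3))).add
      ((((continuousOn_const.mul cd).neg.mul hL).add (hS2.mul hLd)).add
        ((hS2.mul hLd).add (hS.mul (ha2u2.neg.add (continuousOn_const.mul hb2w2)))))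

/-! ### Integrability and Fubini helpers -/

lemma scalarE1 (ψ M S t : ℝ) (hM : M ≠ 0) (hP : M + t*ψ ≠ 0) :
    (M + t*ψ) * (((1 + t*(ψ/M))⁻¹ * t)^2 * S) = t^2 * ((S * M)/(1 + t*(ψ/M))) := by
  have h : (1:ℝ) + t*(ψ/M) = (M + t*ψ)/M := by field_simp
  rw [h]
  field_simp

lemma integrable_of_suppK (K : Set (V3 × V3)) (hK : IsCompact K) (f : V3 × V3 → ℝ)
    (hf : Continuous f) (h0 : ∀ z ∉ K, f z = 0) : Integrable f :=
  hf.integrable_of_hasCompactSupport (HasCompactSupport.intro hK h0)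

lemma fub (K : Set (V3 × V3)) (hK : IsCompact K) (f : V3 × V3 → ℝ)
    (hf : Continuous f) (h0 : ∀ z ∉ K, f z = 0) :
    (∫ x : V3, ∫ q : V3, f (x, q)) = ∫ z : V3 × V3, f z := by
  have hi : Integrable f := integrable_of_suppK K hK f hf h0
  have hi' : Integrable (Function.uncurry fun x q => f (x, q)) (volume.prod volume) := by
    rw [← Measure.volume_eq_prod]; exact hi
  have h := MeasureTheory.integral_integral hi'
  rw [← Measure.volume_eq_prod] at h
  exact h

/-! ### Dominated differentiation of parametrized integrals -/

lemma key_hasDerivAt (r : ℝ) (K : Set (V3 × V3)) (hK : IsCompact K)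
    (F F' : ℝ → (V3 × V3) → ℝ)
    (hcF : ContinuousOn (fun p : ℝ × (V3 × V3) => F p.1 p.2) (Icc (-r) r ×ˢ univ))
    (hcF' : ContinuousOn (fun p : ℝ × (V3 × V3) => F' p.1 p.2) (Icc (-r) r ×ˢ univ))
    (hsF : ∀ ε z, z ∉ K → F ε z = 0)
    (hsF' : ∀ ε z, z ∉ K → F' ε z = 0)
    (hdiff : ∀ z : V3 × V3, ∀ ε ∈ Metric.ball (0:ℝ) r, HasDerivAt (fun t => F t z) (F' ε z) ε)
    (ε₁ : ℝ) (hε₁ : ε₁ ∈ Metric.ball (0:ℝ) r) :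
    HasDerivAt (fun t => ∫ z : V3 × V3, F t z) (∫ z : V3 × V3, F' ε₁ z) ε₁ := by
  have hball : Metric.ball (0:ℝ) r ⊆ Icc (-r) r := by
    intro t ht
    simp only [Metric.mem_ball, Real.dist_eq, sub_zero] at ht
    exact ⟨by linarith [abs_lt.1 ht|>.1], by linarith [abs_lt.1 ht|>.2]⟩
  have hsliceF : ∀ t ∈ Icc (-r:ℝ) r, Continuous (F t) := by
    intro t ht
    rw [← continuousOn_univ]
    have : ContinuousOn ((fun p : ℝ × (V3 × V3) => F p.1 p.2) ∘ (fun z => (t, z))) univ :=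
      hcF.comp (continuous_const.prodMk continuous_id).continuousOn
        (fun z _ => ⟨ht, mem_univ _⟩)
    exact this
  have hsliceF' : ∀ t ∈ Icc (-r:ℝ) r, Continuous (F' t) := by
    intro t ht
    rw [← continuousOn_univ]
    have : ContinuousOn ((fun p : ℝ × (V3 × V3) => F' p.1 p.2) ∘ (fun z => (t, z))) univ :=
      hcF'.comp (continuous_const.prodMk continuous_id).continuousOn
        (fun z _ => ⟨ht, mem_univ _⟩)
    exact this
  have hintF : ∀ t ∈ Icc (-r:ℝ) r, Integrable (F t) :=
    fun t ht => (hsliceF t ht).integrable_of_hasCompactSupport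
      (HasCompactSupport.intro hK (hsF t))
  obtain ⟨C, hC⟩ := (isCompact_Icc.prod hK).exists_bound_of_continuousOn
    (hcF'.mono (prod_mono_right (subset_univ K)))
  set δ : ℝ := r - |ε₁| with hδ
  have hδpos : 0 < δ := by
    simp only [Metric.mem_ball, Real.dist_eq, sub_zero] at hε₁
    simp [hδ]; linarith
  have hballs : Metric.ball ε₁ δ ⊆ Metric.ball (0:ℝ) r := by
    intro t ht
    simp only [Metric.mem_ball, Real.dist_eq, sub_zero] at ht ⊢
    calc |t| ≤ |t - ε₁| + |ε₁| := by
          simpa using abs_add_le (t - ε₁) ε₁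
      _ < δ + |ε₁| := by linarith
      _ = r := by simp [hδ]
  have hmain := hasDerivAt_integral_of_dominated_loc_of_deriv_le (μ := volume)
    (F := F) (F' := F') (x₀ := ε₁) (bound := K.indicator fun _ => C) (Metric.ball_mem_nhds ε₁ hδpos)
    ?_ ?_ ?_ ?_ ?_ ?_
  · exact hmain.2
  · filter_upwards [Metric.ball_mem_nhds ε₁ hδpos] with t ht
    exact (hsliceF t (hball (hballs ht))).aestronglyMeasurable
  · exact hintF ε₁ (hball hε₁)
  · exact (hsliceF' ε₁ (hball hε₁)).aestronglyMeasurable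
  · refine Eventually.of_forall fun z => fun t ht => ?_
    by_cases hz : z ∈ K
    · have : ‖F' t z‖ ≤ C := hC (t, z) ⟨hball (hballs ht), hz⟩
      simpa [indicator_of_mem hz] using this
    · simp [hsF' t z hz, indicator_of_notMem hz]
  · rw [integrable_indicator_iff hK.measurableSet]
    exact integrableOn_const hK.measure_lt_top.ne
  · exact Eventually.of_forall fun z => fun t ht => hdiff z t (hballs ht)

theorem dissipation_variations_at_equilibrium
    (μ lam cB : ℝ) (hμ : 0 < μ) (hlam : 0 < lam) (hcB : 0 < cB)
    (UA UB : V3 → ℝ) (hUB : ContDiff ℝ (⊤ : ℕ∞) UB) (hUAB : ∀ q, UA q = 2 * UB q)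
    (MA MB : V3 → ℝ)
    (hMA : ∀ q, MA q = cB ^ 2 * Real.exp (-UA q))
    (hMB : ∀ q, MB q = cB * Real.exp (-UB q))
    (v : V3 → V3) (hv : ContDiff ℝ (⊤ : ℕ∞) v) (hvs : HasCompactSupport v)
    (ψA ψB : V3 → V3 → ℝ)
    (hψA : ContDiff ℝ (⊤ : ℕ∞) (fun z : V3 × V3 => ψA z.1 z.2))
    (hψB : ContDiff ℝ (⊤ : ℕ∞) (fun z : V3 × V3 => ψB z.1 z.2))
    (hψsupp : ∃ K : Set (V3 × V3), IsCompact K ∧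
      ∀ z ∉ K, ψA (Prod.fst z) (Prod.snd z) = 0 ∧ ψB (Prod.fst z) (Prod.snd z) = 0)
    (hpos : ∃ ε₀ > (0:ℝ), ∀ ε : ℝ, |ε| < ε₀ → ∀ x q,
      0 < MA q + ε * ψA x q ∧ 0 < MB q + ε * ψB x q) :
    Diss μ lam MA MB (fun _ _ => 0) (fun _ q => MA q) (fun _ q => MB q) = 0 ∧
    deriv (fun ε => Diss μ lam MA MB (fun x i => ε * v x i)
      (fun x q => MA q + ε * ψA x q) (fun x q => MB q + ε * ψB x q)) 0 = 0 ∧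
    deriv (deriv (fun ε => Diss μ lam MA MB (fun x i => ε * v x i)
        (fun x q => MA q + ε * ψA x q) (fun x q => MB q + ε * ψB x q))) 0
      = 2 * (∫ x : V3, μ * ∑ j, ∑ k, (pd k (fun y => v y j) x) ^ 2)
        + 2 * lam * (∫ x : V3, ∫ q : V3,
            ((∑ j, (pd j (fun w => ψA x w / MA w) q) ^ 2) * MA q
              + (∑ j, (pd j (fun w => ψB x w / MB w) q) ^ 2) * MB q))
        + 2 * lam * (∫ x : V3, ∫ q : V3,
            (ψA x q / Real.sqrt (MA q) - 2 * ψB x q) ^ 2) ∧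
    0 ≤ deriv (deriv (fun ε => Diss μ lam MA MB (fun x i => ε * v x i)
        (fun x q => MA q + ε * ψA x q) (fun x q => MB q + ε * ψB x q))) 0 := by
  obtain ⟨K, hK, hsupp⟩ := hψsupp
  obtain ⟨ε₀, hε₀, hposs⟩ := hpos
  have hMBpos : ∀ q, 0 < MB q := fun q => by rw [hMB q]; positivity
  have hMApos : ∀ q, 0 < MA q := fun q => by rw [hMA q]; positivity
  have hMAB : ∀ q, MA q = (MB q)^2 := by
    intro q
    rw [hMA q, hMB q, hUAB q, mul_pow,
      show -(2*UB q) = (-UB q) + (-UB q) by ring, Real.exp_add]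
    ring
  -- smoothness of the Maxwellians
  have hMBc : ContDiff ℝ (⊤ : ℕ∞) MB := by
    have h : MB = fun q => cB * Real.exp (-UB q) := funext hMB
    rw [h]; exact contDiff_const.mul (hUB.neg.exp)
  have hMAc : ContDiff ℝ (⊤ : ℕ∞) MA := by
    have h : MA = fun q => cB^2 * Real.exp (-(2*UB q)) := funext fun q => by
      rw [hMA q, hUAB q]
    rw [h]; exact contDiff_const.mul ((contDiff_const.mul hUB).neg.exp)
  -- smoothness of the relative perturbations
  have hPhiA : ContDiff ℝ (⊤ : ℕ∞) (fun z : V3 × V3 => ψA z.1 z.2 / MA z.2) :=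
    hψA.div (hMAc.comp contDiff_snd) (fun z => (hMApos z.2).ne')
  have hPhiB : ContDiff ℝ (⊤ : ℕ∞) (fun z : V3 × V3 => ψB z.1 z.2 / MB z.2) :=
    hψB.div (hMBc.comp contDiff_snd) (fun z => (hMBpos z.2).ne')
  -- differentiability of slices
  have hgA : ∀ x q, DifferentiableAt ℝ (fun w => ψA x w / MA w) q := by
    intro x q
    have h1 : DifferentiableAt ℝ (fun z : V3 × V3 => ψA z.1 z.2 / MA z.2) (x, q) :=
      (hPhiA.differentiable (by simp)) (x, q)
    have h2 : DifferentiableAt ℝ (fun w : V3 => ((x, w) : V3 × V3)) q :=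
      (differentiableAt_const x).prodMk differentiableAt_id
    exact h1.comp q h2
  have hgB : ∀ x q, DifferentiableAt ℝ (fun w => ψB x w / MB w) q := by
    intro x q
    have h1 : DifferentiableAt ℝ (fun z : V3 × V3 => ψB z.1 z.2 / MB z.2) (x, q) :=
      (hPhiB.differentiable (by simp)) (x, q)
    have h2 : DifferentiableAt ℝ (fun w : V3 => ((x, w) : V3 × V3)) q :=
      (differentiableAt_const x).prodMk differentiableAt_id
    exact h1.comp q h2
  -- joint continuity of the q-partials
  have hajc : ∀ j : Fin 3,
      Continuous (fun z : V3 × V3 => pd j (fun w => ψA z.1 w / MA w) z.2) := by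
    intro j
    have heq : (fun z : V3 × V3 => pd j (fun w => ψA z.1 w / MA w) z.2)
        = fun z : V3 × V3 =>
            fderiv ℝ (fun z : V3 × V3 => ψA z.1 z.2 / MA z.2) z ((0 : V3), Pi.single j 1) := by
      funext z
      have h1 : HasFDerivAt (fun w : V3 => ψA z.1 w / MA w)
          ((fderiv ℝ (fun z : V3 × V3 => ψA z.1 z.2 / MA z.2) z).comp
            (ContinuousLinearMap.inr ℝ V3 V3)) z.2 :=
        ((((hPhiA.differentiable (by simp)) z).hasFDerivAt).comp z.2
          (hasFDerivAt_prodMk_right (𝕜 := ℝ) z.1 z.2) :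
          HasFDerivAt ((fun z : V3 × V3 => ψA z.1 z.2 / MA z.2) ∘ fun w => (z.1, w)) _ z.2)
      show fderiv ℝ (fun w : V3 => ψA z.1 w / MA w) z.2 (Pi.single j 1) = _
      rw [h1.fderiv]
      simp
    rw [heq]
    exact (hPhiA.continuous_fderiv (by simp)).clm_apply continuous_const
  have hbjc : ∀ j : Fin 3,
      Continuous (fun z : V3 × V3 => pd j (fun w => ψB z.1 w / MB w) z.2) := by
    intro j
    have heq : (fun z : V3 × V3 => pd j (fun w => ψB z.1 w / MB w) z.2)
        = fun z : V3 × V3 =>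
            fderiv ℝ (fun z : V3 × V3 => ψB z.1 z.2 / MB z.2) z ((0 : V3), Pi.single j 1) := by
      funext z
      have h1 : HasFDerivAt (fun w : V3 => ψB z.1 w / MB w)
          ((fderiv ℝ (fun z : V3 × V3 => ψB z.1 z.2 / MB z.2) z).comp
            (ContinuousLinearMap.inr ℝ V3 V3)) z.2 :=
        ((((hPhiB.differentiable (by simp)) z).hasFDerivAt).comp z.2
          (hasFDerivAt_prodMk_right (𝕜 := ℝ) z.1 z.2) :
          HasFDerivAt ((fun z : V3 × V3 => ψB z.1 z.2 / MB z.2) ∘ fun w => (z.1, w)) _ z.2)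
      show fderiv ℝ (fun w : V3 => ψB z.1 w / MB w) z.2 (Pi.single j 1) = _
      rw [h1.fderiv]
      simp
    rw [heq]
    exact (hPhiB.continuous_fderiv (by simp)).clm_apply continuous_const
  -- vanishing of the q-partials off K
  have hajz : ∀ (j : Fin 3) (z : V3 × V3), z ∉ K →
      pd j (fun w => ψA z.1 w / MA w) z.2 = 0 ∧ pd j (fun w => ψB z.1 w / MB w) z.2 = 0 := by
    rintro j ⟨x, q⟩ hz
    have hmem : Kᶜ ∈ 𝓝 ((x, q) : V3 × V3) := hK.isClosed.isOpen_compl.mem_nhds hz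
    obtain ⟨u, hu, w, hw, huw⟩ := mem_nhds_prod_iff.1 hmem
    constructor
    · have hev : (fun w' => ψA x w' / MA w') =ᶠ[𝓝 q] fun _ => (0:ℝ) := by
        filter_upwards [hw] with w' hw'
        have hmem2 : ((x, w') : V3 × V3) ∉ K := huw ⟨mem_of_mem_nhds hu, hw'⟩
        rw [(hsupp (x, w') hmem2).1, zero_div]
      show fderiv ℝ (fun w' => ψA x w' / MA w') q (Pi.single j 1) = 0
      rw [hev.fderiv_eq]
      simp
    · have hev : (fun w' => ψB x w' / MB w') =ᶠ[𝓝 q] fun _ => (0:ℝ) := by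
        filter_upwards [hw] with w' hw'
        have hmem2 : ((x, w') : V3 × V3) ∉ K := huw ⟨mem_of_mem_nhds hu, hw'⟩
        rw [(hsupp (x, w') hmem2).2, zero_div]
      show fderiv ℝ (fun w' => ψB x w' / MB w') q (Pi.single j 1) = 0
      rw [hev.fderiv_eq]
      simp
  -- parameter functions
  set aF : V3 × V3 → ℝ := fun z => ψA z.1 z.2 / MA z.2 with haF
  set bF : V3 × V3 → ℝ := fun z => ψB z.1 z.2 / MB z.2 with hbF
  set cF : V3 × V3 → ℝ := fun z => ψA z.1 z.2 - 2 * MB z.2 * ψB z.1 z.2 with hcF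
  set dF : V3 × V3 → ℝ := fun z => (ψB z.1 z.2)^2 with hdF
  set A2F : V3 × V3 → ℝ :=
    fun z => (∑ j, (pd j (fun w => ψA z.1 w / MA w) z.2)^2) * MA z.2 with hA2F
  set B2F : V3 × V3 → ℝ :=
    fun z => (∑ j, (pd j (fun w => ψB z.1 w / MB w) z.2)^2) * MB z.2 with hB2F
  -- continuity of parameters
  have hacont : Continuous aF := by
    rw [haF]
    exact (hψA.continuous).div ((hMAc.continuous).comp continuous_snd)
      (fun z => (hMApos z.2).ne')
  have hbcont : Continuous bF := by
    rw [hbF]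
    exact (hψB.continuous).div ((hMBc.continuous).comp continuous_snd)
      (fun z => (hMBpos z.2).ne')
  have hccont : Continuous cF := by
    rw [hcF]
    exact (hψA.continuous).sub
      ((continuous_const.mul ((hMBc.continuous).comp continuous_snd)).mul (hψB.continuous))
  have hdcont : Continuous dF := by
    rw [hdF]; exact (hψB.continuous).pow 2
  have hA2cont : Continuous A2F := by
    rw [hA2F]
    exact (continuous_finset_sum _ fun j _ => (hajc j).pow 2).mul
      ((hMAc.continuous).comp continuous_snd)
  have hB2cont : Continuous B2F := by
    rw [hB2F]
    exact (continuous_finset_sum _ fun j _ => (hbjc j).pow 2).mul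
      ((hMBc.continuous).comp continuous_snd)
  -- vanishing of parameters off K
  have hz0 : ∀ z ∉ K, aF z = 0 ∧ bF z = 0 ∧ cF z = 0 ∧ dF z = 0 ∧ A2F z = 0 ∧ B2F z = 0 := by
    intro z hz
    have h1 := (hsupp z hz).1
    have h2 := (hsupp z hz).2
    refine ⟨?_, ?_, ?_, ?_, ?_, ?_⟩
    · rw [haF]; simp only [h1, zero_div]
    · rw [hbF]; simp only [h2, zero_div]
    · rw [hcF]; simp only [h1, h2]; ring
    · rw [hdF]; simp only [h2]; ring
    · rw [hA2F]
      have : ∀ j : Fin 3, pd j (fun w => ψA z.1 w / MA w) z.2 = 0 := fun j => (hajz j z hz).1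
      simp only [this]
      simp
    · rw [hB2F]
      have : ∀ j : Fin 3, pd j (fun w => ψB z.1 w / MB w) z.2 = 0 := fun j => (hajz j z hz).2
      simp only [this]
      simp
  -- positivity of the denominators
  have hEposA : ∀ t : ℝ, |t| < ε₀ → ∀ z : V3 × V3, 0 < 1 + t * aF z := by
    intro t ht z
    have h1 := (hposs t ht z.1 z.2).1
    have h2 : (0:ℝ) < (MA z.2 + t * ψA z.1 z.2) / MA z.2 := div_pos h1 (hMApos z.2)
    have h3 : (MA z.2 + t * ψA z.1 z.2) / MA z.2 = 1 + t * (ψA z.1 z.2 / MA z.2) := by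
      have hne := (hMApos z.2).ne'
      field_simp
    rw [h3] at h2
    rw [haF]
    exact h2
  have hEposB : ∀ t : ℝ, |t| < ε₀ → ∀ z : V3 × V3, 0 < 1 + t * bF z := by
    intro t ht z
    have h1 := (hposs t ht z.1 z.2).2
    have h2 : (0:ℝ) < (MB z.2 + t * ψB z.1 z.2) / MB z.2 := div_pos h1 (hMBpos z.2)
    have h3 : (MB z.2 + t * ψB z.1 z.2) / MB z.2 = 1 + t * (ψB z.1 z.2 / MB z.2) := by
      have hne := (hMBpos z.2).ne'
      field_simp
    rw [h3] at h2
    rw [hbF]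
    exact h2
  -- the reduced integrand families
  set Pp : ℝ → V3 × V3 → ℝ := fun t z =>
    t^2 * (A2F z / (1 + t*aF z)) + t^2 * (B2F z / (1 + t*bF z)) with hPp
  set Qq : ℝ → V3 × V3 → ℝ := fun t z =>
    (t*cF z - t^2*dF z) * (Real.log (1 + t*aF z) - 2 * Real.log (1 + t*bF z)) with hQq
  set Ff : ℝ → V3 × V3 → ℝ := fun t z =>
    f0 (A2F z) (B2F z) (aF z) (bF z) (cF z) (dF z) t with hFf
  set Ff1 : ℝ → V3 × V3 → ℝ := fun t z =>
    f1 (A2F z) (B2F z) (aF z) (bF z) (cF z) (dF z) t with hFf1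
  set Ff2 : ℝ → V3 × V3 → ℝ := fun t z =>
    f2 (A2F z) (B2F z) (aF z) (bF z) (cF z) (dF z) t with hFf2
  have hFfsplit : ∀ t z, Ff t z = Pp t z + Qq t z := by
    intro t z
    simp only [hFf, hPp, hQq, f0]
  -- computation of the micro gradient terms
  have hpdlogA : ∀ (t : ℝ), |t| < ε₀ → ∀ (x q : V3) (j : Fin 3),
      pd j (fun w => Real.log ((MA w + t * ψA x w) / MA w)) q
        = ((1 + t * (ψA x q / MA q))⁻¹ * t) * pd j (fun w => ψA x w / MA w) q := by
    intro t ht x q j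
    have hrw : (fun w => Real.log ((MA w + t * ψA x w) / MA w))
        = fun w => Real.log (1 + t * (ψA x w / MA w)) := by
      funext w
      have hne := (hMApos w).ne'
      rw [show (MA w + t * ψA x w) / MA w = 1 + t * (ψA x w / MA w) by field_simp]
    rw [hrw]
    have hne1 : (1:ℝ) + t * (ψA x q / MA q) ≠ 0 := by
      have h := hEposA t ht (x, q)
      rw [haF] at h
      simpa using h.ne'
    have h1 : HasFDerivAt (fun w => 1 + t * (ψA x w / MA w))
        ((t : ℝ) • fderiv ℝ (fun w => ψA x w / MA w) q) q :=
      ((hgA x q).hasFDerivAt.const_mul t).const_add 1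
    have h3 := h1.log hne1
    show fderiv ℝ (fun w => Real.log (1 + t * (ψA x w / MA w))) q (Pi.single j 1) = _
    rw [h3.fderiv]
    show _ = ((1 + t * (ψA x q / MA q))⁻¹ * t)
        * fderiv ℝ (fun w => ψA x w / MA w) q (Pi.single j 1)
    simp [mul_assoc]
  have hpdlogB : ∀ (t : ℝ), |t| < ε₀ → ∀ (x q : V3) (j : Fin 3),
      pd j (fun w => Real.log ((MB w + t * ψB x w) / MB w)) q
        = ((1 + t * (ψB x q / MB q))⁻¹ * t) * pd j (fun w => ψB x w / MB w) q := by
    intro t ht x q j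
    have hrw : (fun w => Real.log ((MB w + t * ψB x w) / MB w))
        = fun w => Real.log (1 + t * (ψB x w / MB w)) := by
      funext w
      have hne := (hMBpos w).ne'
      rw [show (MB w + t * ψB x w) / MB w = 1 + t * (ψB x w / MB w) by field_simp]
    rw [hrw]
    have hne1 : (1:ℝ) + t * (ψB x q / MB q) ≠ 0 := by
      have h := hEposB t ht (x, q)
      rw [hbF] at h
      simpa using h.ne'
    have h1 : HasFDerivAt (fun w => 1 + t * (ψB x w / MB w))
        ((t : ℝ) • fderiv ℝ (fun w => ψB x w / MB w) q) q :=
      ((hgB x q).hasFDerivAt.const_mul t).const_add 1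
    have h3 := h1.log hne1
    show fderiv ℝ (fun w => Real.log (1 + t * (ψB x w / MB w))) q (Pi.single j 1) = _
    rw [h3.fderiv]
    show _ = ((1 + t * (ψB x q / MB q))⁻¹ * t)
        * fderiv ℝ (fun w => ψB x w / MB w) q (Pi.single j 1)
    simp [mul_assoc]
  -- pointwise identity for the micro-dissipation integrand
  have hE1 : ∀ (t : ℝ), |t| < ε₀ → ∀ (x q : V3),
      (MA q + t * ψA x q) * ∑ j, (pd j (fun w => Real.log ((MA w + t * ψA x w) / MA w)) q)^2
        + (MB q + t * ψB x q) * ∑ j, (pd j (fun w => Real.log ((MB w + t * ψB x w) / MB w)) q)^2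
      = Pp t (x, q) := by
    intro t ht x q
    have hsum : ∀ (C : ℝ) (g : Fin 3 → ℝ), (∑ j, (C * g j)^2) = C^2 * ∑ j, (g j)^2 := by
      intro C g; rw [Finset.mul_sum]; exact Finset.sum_congr rfl fun j _ => by ring
    have hune : (1:ℝ) + t * (ψA x q / MA q) ≠ 0 := by
      have h := hEposA t ht (x, q); rw [haF] at h; simpa using h.ne'
    have hwne : (1:ℝ) + t * (ψB x q / MB q) ≠ 0 := by
      have h := hEposB t ht (x, q); rw [hbF] at h; simpa using h.ne'
    have hMAne := (hMApos q).ne'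
    have hMBne := (hMBpos q).ne'
    simp only [hpdlogA t ht x q, hpdlogB t ht x q, hsum, hPp, hA2F, hB2F, haF, hbF]
    rw [scalarE1 (ψA x q) (MA q) _ t hMAne (hposs t ht x q).1.ne',
      scalarE1 (ψB x q) (MB q) _ t hMBne (hposs t ht x q).2.ne']
  -- pointwise identity for the reaction integrand
  have hE2 : ∀ (t : ℝ), |t| < ε₀ → ∀ (x q : V3),
      (MA q + t * ψA x q - (MB q + t * ψB x q)^2)
          * Real.log ((MA q + t * ψA x q) / (MB q + t * ψB x q)^2)
        = Qq t (x, q) := by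
    intro t ht x q
    have hPA : 0 < MA q + t * ψA x q := (hposs t ht x q).1
    have hPB : 0 < MB q + t * ψB x q := (hposs t ht x q).2
    have hune : (0:ℝ) < 1 + t * (ψA x q / MA q) := by
      have h := hEposA t ht (x, q); rw [haF] at h; simpa using h
    have hwne : (0:ℝ) < 1 + t * (ψB x q / MB q) := by
      have h := hEposB t ht (x, q); rw [hbF] at h; simpa using h
    have hMAne := (hMApos q).ne'
    have hMBne := (hMBpos q).ne'
    have e1 : MA q + t * ψA x q = MA q * (1 + t * (ψA x q / MA q)) := by field_simp
    have e2 : MB q + t * ψB x q = MB q * (1 + t * (ψB x q / MB q)) := by field_simp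
    have hlog : Real.log ((MA q + t * ψA x q) / (MB q + t * ψB x q)^2)
        = Real.log (1 + t * (ψA x q / MA q)) - 2 * Real.log (1 + t * (ψB x q / MB q)) := by
      rw [Real.log_div hPA.ne' (pow_ne_zero 2 hPB.ne'), Real.log_pow, e1, e2,
        Real.log_mul hMAne hune.ne', Real.log_mul hMBne hwne.ne', hMAB q, Real.log_pow]
      push_cast
      ring
    have hfront : MA q + t * ψA x q - (MB q + t * ψB x q)^2
        = t * (ψA x q - 2 * MB q * ψB x q) - t^2 * (ψB x q)^2 := by
      rw [hMAB q]; ring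
    rw [hlog, hfront]
  -- macroscopic term scaling
  have hvj : ∀ j : Fin 3, Differentiable ℝ (fun y => v y j) := by
    intro j
    have hdv : Differentiable ℝ v := hv.differentiable (by simp)
    exact fun y =>
      ((ContinuousLinearMap.proj j : V3 →L[ℝ] ℝ)).differentiableAt.comp y (hdv y)
  set T1v : ℝ := ∫ x : V3, μ * ∑ j, ∑ k, (pd k (fun y => v y j) x)^2 with hT1v
  have hT1 : ∀ t : ℝ,
      (∫ x : V3, μ * ∑ j, ∑ k, (pd k (fun y => t * v y j) x)^2) = t^2 * T1v := by
    intro t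
    have hpt : ∀ x, μ * ∑ j, ∑ k, (pd k (fun y => t * v y j) x)^2
        = t^2 * (μ * ∑ j, ∑ k, (pd k (fun y => v y j) x)^2) := by
      intro x
      have hk : ∀ (j k : Fin 3), pd k (fun y => t * v y j) x = t * pd k (fun y => v y j) x := by
        intro j k
        unfold pd
        rw [fderiv_const_mul (hvj j x) t]
        simp
      simp only [hk, mul_pow]
      simp only [← Finset.mul_sum]
      ring
    simp only [hpt]
    rw [hT1v]
    exact integral_const_mul _ _
  -- support and continuity of the reduced integrands
  have hPpsupp : ∀ (t : ℝ) z, z ∉ K → Pp t z = 0 := by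
    intro t z hz
    obtain ⟨h1, h2, h3, h4, h5, h6⟩ := hz0 z hz
    rw [hPp]
    simp only [h1, h2, h5, h6]
    simp
  have hQqsupp : ∀ (t : ℝ) z, z ∉ K → Qq t z = 0 := by
    intro t z hz
    obtain ⟨h1, h2, h3, h4, h5, h6⟩ := hz0 z hz
    rw [hQq]
    simp only [h3, h4]
    simp
  have hPpcont : ∀ t : ℝ, |t| < ε₀ → Continuous (Pp t) := by
    intro t ht
    have hU : Continuous (fun z : V3 × V3 => 1 + t * aF z) :=
      continuous_const.add (continuous_const.mul hacont)
    have hW : Continuous (fun z : V3 × V3 => 1 + t * bF z) :=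
      continuous_const.add (continuous_const.mul hbcont)
    have hUne : ∀ z, (1:ℝ) + t * aF z ≠ 0 := fun z => (hEposA t ht z).ne'
    have hWne : ∀ z, (1:ℝ) + t * bF z ≠ 0 := fun z => (hEposB t ht z).ne'
    rw [hPp]
    exact (continuous_const.mul (hA2cont.div hU hUne)).add
      (continuous_const.mul (hB2cont.div hW hWne))
  have hQqcont : ∀ t : ℝ, |t| < ε₀ → Continuous (Qq t) := by
    intro t ht
    have hU : Continuous (fun z : V3 × V3 => 1 + t * aF z) :=
      continuous_const.add (continuous_const.mul hacont)
    have hW : Continuous (fun z : V3 × V3 => 1 + t * bF z) :=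
      continuous_const.add (continuous_const.mul hbcont)
    have hUne : ∀ z, (1:ℝ) + t * aF z ≠ 0 := fun z => (hEposA t ht z).ne'
    have hWne : ∀ z, (1:ℝ) + t * bF z ≠ 0 := fun z => (hEposB t ht z).ne'
    rw [hQq]
    exact ((continuous_const.mul hccont).sub (continuous_const.mul hdcont)).mul
      ((hU.log hUne).sub (continuous_const.mul (hW.log hWne)))
  have hPpint : ∀ t : ℝ, |t| < ε₀ → Integrable (Pp t) :=
    fun t ht => integrable_of_suppK K hK _ (hPpcont t ht) (hPpsupp t)
  have hQqint : ∀ t : ℝ, |t| < ε₀ → Integrable (Qq t) :=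
    fun t ht => integrable_of_suppK K hK _ (hQqcont t ht) (hQqsupp t)
  -- the master pointwise-in-ε identity
  set Φf : ℝ → ℝ := fun ε => Diss μ lam MA MB (fun x i => ε * v x i)
      (fun x q => MA q + ε * ψA x q) (fun x q => MB q + ε * ψB x q) with hΦf
  have heq : ∀ t : ℝ, |t| < ε₀ → Φf t = t^2 * T1v + lam * ∫ z : V3 × V3, Ff t z := by
    intro t ht
    rw [hΦf]
    simp only [Diss]
    rw [hT1 t]
    simp only [hE1 t ht, hE2 t ht]
    rw [fub K hK (Pp t) (hPpcont t ht) (hPpsupp t), fub K hK (Qq t) (hQqcont t ht) (hQqsupp t)]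
    have hsplit : (∫ z : V3 × V3, Ff t z) = (∫ z : V3 × V3, Pp t z) + ∫ z : V3 × V3, Qq t z := by
      rw [show (fun z : V3 × V3 => Ff t z) = fun z => Pp t z + Qq t z from
        funext fun z => hFfsplit t z]
      exact integral_add (hPpint t ht) (hQqint t ht)
    rw [hsplit]
    ring
  -- the dominated-derivative machinery
  set r : ℝ := ε₀/2 with hr
  have hrpos : 0 < r := by rw [hr]; linarith
  have hIccsub : ∀ t ∈ Icc (-r) r, |t| < ε₀ := by
    intro t ht
    rw [abs_lt]
    constructor
    · have := ht.1; rw [hr] at this; linarith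
    · have := ht.2; rw [hr] at this; linarith
  have hballsub : ∀ t ∈ Metric.ball (0:ℝ) r, |t| < ε₀ := by
    intro t ht
    simp only [Metric.mem_ball, Real.dist_eq, sub_zero] at ht
    rw [hr] at ht
    linarith
  have hposIcc : ∀ (t : ℝ) (z : V3 × V3), t ∈ Icc (-r) r →
      0 < 1 + t * aF z ∧ 0 < 1 + t * bF z :=
    fun t z ht => ⟨hEposA t (hIccsub t ht) z, hEposB t (hIccsub t ht) z⟩
  obtain ⟨hc0, hc1, hc2⟩ := contOn_all r A2F B2F aF bF cF dF
    hA2cont hB2cont hacont hbcont hccont hdcont hposIcc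
  have hFf0supp : ∀ (t : ℝ) z, z ∉ K → Ff t z = 0 := by
    intro t z hz
    obtain ⟨h1, h2, h3, h4, h5, h6⟩ := hz0 z hz
    rw [hFf]; simp only [h1, h2, h3, h4, h5, h6]; exact f0_zero t
  have hFf1supp : ∀ (t : ℝ) z, z ∉ K → Ff1 t z = 0 := by
    intro t z hz
    obtain ⟨h1, h2, h3, h4, h5, h6⟩ := hz0 z hz
    rw [hFf1]; simp only [h1, h2, h3, h4, h5, h6]; exact f1_zero t
  have hFf2supp : ∀ (t : ℝ) z, z ∉ K → Ff2 t z = 0 := by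
    intro t z hz
    obtain ⟨h1, h2, h3, h4, h5, h6⟩ := hz0 z hz
    rw [hFf2]; simp only [h1, h2, h3, h4, h5, h6]; exact f2_zero t
  have hdiff1 : ∀ z : V3 × V3, ∀ ε ∈ Metric.ball (0:ℝ) r,
      HasDerivAt (fun t => Ff t z) (Ff1 ε z) ε := by
    intro z ε hε
    have h := hballsub ε hε
    exact hd1 _ _ _ _ _ _ ε (hEposA ε h z) (hEposB ε h z)
  have hdiff2 : ∀ z : V3 × V3, ∀ ε ∈ Metric.ball (0:ℝ) r,
      HasDerivAt (fun t => Ff1 t z) (Ff2 ε z) ε := by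
    intro z ε hε
    have h := hballsub ε hε
    exact hd2 _ _ _ _ _ _ ε (hEposA ε h z) (hEposB ε h z)
  have hkey1 : ∀ ε₁ ∈ Metric.ball (0:ℝ) r,
      HasDerivAt (fun t => ∫ z : V3 × V3, Ff t z) (∫ z : V3 × V3, Ff1 ε₁ z) ε₁ :=
    fun ε₁ hε₁ => key_hasDerivAt r K hK Ff Ff1 hc0 hc1 hFf0supp hFf1supp hdiff1 ε₁ hε₁
  have hkey2 : HasDerivAt (fun t => ∫ z : V3 × V3, Ff1 t z) (∫ z : V3 × V3, Ff2 0 z) 0 :=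
    key_hasDerivAt r K hK Ff1 Ff2 hc1 hc2 hFf1supp hFf2supp hdiff2 0
      (Metric.mem_ball_self hrpos)
  have hDPhi : ∀ ε₁ ∈ Metric.ball (0:ℝ) r,
      HasDerivAt Φf (2*ε₁*T1v + lam * ∫ z : V3 × V3, Ff1 ε₁ z) ε₁ := by
    intro ε₁ hε₁
    have ha := (hasDerivAt_pow 2 ε₁).mul_const T1v
    have hb := (hkey1 ε₁ hε₁).const_mul lam
    have h1 := (ha.congr_deriv (show (2:ℕ) * ε₁^(2-1) * T1v = 2*ε₁*T1v by push_cast; ring)).add hb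
    refine h1.congr_of_eventuallyEq ?_
    filter_upwards [Metric.isOpen_ball.mem_nhds hε₁] with t ht
    exact heq t (hballsub t ht)
  have hder1 : deriv Φf 0 = 0 := by
    have h := (hDPhi 0 (Metric.mem_ball_self hrpos)).deriv
    rw [h]
    have hz : ∀ z : V3 × V3, Ff1 0 z = 0 := fun z => by
      rw [hFf1]; exact f1_at0 _ _ _ _ _ _
    simp [hz]
  have hevd : deriv Φf =ᶠ[𝓝 (0:ℝ)] fun ε => 2*ε*T1v + lam * ∫ z : V3 × V3, Ff1 ε z := by
    filter_upwards [Metric.ball_mem_nhds (0:ℝ) hrpos] with t ht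
    exact (hDPhi t ht).deriv
  have hD2 : HasDerivAt (fun ε : ℝ => 2*ε*T1v + lam * ∫ z : V3 × V3, Ff1 ε z)
      (2*T1v + lam * ∫ z : V3 × V3, Ff2 0 z) 0 := by
    have ha := ((hasDerivAt_id (0:ℝ)).const_mul 2).mul_const T1v
    exact (ha.congr_deriv (by ring)).add (hkey2.const_mul lam)
  have hder2 : deriv (deriv Φf) 0 = 2*T1v + lam * ∫ z : V3 × V3, Ff2 0 z := by
    rw [hevd.deriv_eq]
    exact hD2.deriv
  -- value of the second variation
  have hFf2val : ∀ z : V3 × V3,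
      Ff2 0 z = 2*A2F z + 2*B2F z + 2*(cF z*(aF z - 2*bF z)) := fun z => by
    rw [hFf2]; exact f2_at0 _ _ _ _ _ _
  have hreac : ∀ z : V3 × V3, cF z * (aF z - 2*bF z)
      = (ψA z.1 z.2 / Real.sqrt (MA z.2) - 2 * ψB z.1 z.2)^2 := by
    intro z
    simp only [haF, hbF, hcF]
    have h1 : Real.sqrt (MA z.2) = MB z.2 := by
      rw [hMAB z.2]; exact Real.sqrt_sq (hMBpos z.2).le
    have hMBne := (hMBpos z.2).ne'
    rw [h1, hMAB z.2]
    field_simp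
  have hi1 : Integrable (fun z : V3 × V3 => A2F z + B2F z) :=
    integrable_of_suppK K hK _ (hA2cont.add hB2cont)
      (fun z hz => by
        show A2F z + B2F z = 0
        rw [(hz0 z hz).2.2.2.2.1, (hz0 z hz).2.2.2.2.2]; ring)
  have hsqcont : Continuous
      (fun z : V3 × V3 => (ψA z.1 z.2 / Real.sqrt (MA z.2) - 2 * ψB z.1 z.2)^2) := by
    have hsA : Continuous (fun z : V3 × V3 => Real.sqrt (MA z.2)) :=
      Real.continuous_sqrt.comp ((hMAc.continuous).comp continuous_snd)
    have hsne : ∀ z : V3 × V3, Real.sqrt (MA z.2) ≠ 0 :=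
      fun z => (Real.sqrt_pos.2 (hMApos z.2)).ne'
    exact (((hψA.continuous).div hsA hsne).sub
      (continuous_const.mul (hψB.continuous))).pow 2
  have hsqsupp : ∀ z ∉ K,
      (ψA z.1 z.2 / Real.sqrt (MA z.2) - 2 * ψB z.1 z.2)^2 = 0 := by
    intro z hz
    rw [(hsupp z hz).1, (hsupp z hz).2]
    simp
  have hi2 : Integrable
      (fun z : V3 × V3 => (ψA z.1 z.2 / Real.sqrt (MA z.2) - 2 * ψB z.1 z.2)^2) :=
    integrable_of_suppK K hK _ hsqcont hsqsupp
  have hsplit2 : (∫ z : V3 × V3, Ff2 0 z)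
      = 2*(∫ z : V3 × V3, (A2F z + B2F z))
        + 2*(∫ z : V3 × V3, (ψA z.1 z.2 / Real.sqrt (MA z.2) - 2 * ψB z.1 z.2)^2) := by
    have h1 : (fun z : V3 × V3 => Ff2 0 z)
        = fun z => 2*(A2F z + B2F z)
            + 2*((ψA z.1 z.2 / Real.sqrt (MA z.2) - 2 * ψB z.1 z.2)^2) :=
      funext fun z => by rw [hFf2val z, ← hreac z]; ring
    rw [h1, integral_add (hi1.const_mul 2) (hi2.const_mul 2),
      integral_const_mul, integral_const_mul]
  have hfub2 : (∫ x : V3, ∫ q : V3,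
        ((∑ j, (pd j (fun w => ψA x w / MA w) q) ^ 2) * MA q
          + (∑ j, (pd j (fun w => ψB x w / MB w) q) ^ 2) * MB q))
      = ∫ z : V3 × V3, (A2F z + B2F z) :=
    fub K hK (fun z => A2F z + B2F z) (hA2cont.add hB2cont)
      (fun z hz => by
        show A2F z + B2F z = 0
        rw [(hz0 z hz).2.2.2.2.1, (hz0 z hz).2.2.2.2.2]; ring)
  have hfub3 : (∫ x : V3, ∫ q : V3, (ψA x q / Real.sqrt (MA q) - 2 * ψB x q) ^ 2)
      = ∫ z : V3 × V3, (ψA z.1 z.2 / Real.sqrt (MA z.2) - 2 * ψB z.1 z.2)^2 :=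
    fub K hK _ hsqcont hsqsupp
  -- third conjunct
  have hval : deriv (deriv Φf) 0
      = 2 * T1v
        + 2 * lam * (∫ x : V3, ∫ q : V3,
            ((∑ j, (pd j (fun w => ψA x w / MA w) q) ^ 2) * MA q
              + (∑ j, (pd j (fun w => ψB x w / MB w) q) ^ 2) * MB q))
        + 2 * lam * (∫ x : V3, ∫ q : V3,
            (ψA x q / Real.sqrt (MA q) - 2 * ψB x q) ^ 2) := by
    rw [hder2, hsplit2, hfub2, hfub3]
    ring
  -- first conjunct
  have hconj1 : Diss μ lam MA MB (fun _ _ => 0) (fun _ q => MA q) (fun _ q => MB q) = 0 := by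
    have h1 : (fun w => Real.log (MA w / MA w)) = fun _ : V3 => (0:ℝ) :=
      funext fun w => by rw [div_self (hMApos w).ne', Real.log_one]
    have h2 : (fun w => Real.log (MB w / MB w)) = fun _ : V3 => (0:ℝ) :=
      funext fun w => by rw [div_self (hMBpos w).ne', Real.log_one]
    simp only [Diss]
    simp only [h1, h2]
    simp [pd, hMAB]
  -- nonnegativity
  have hnn : 0 ≤ deriv (deriv Φf) 0 := by
    rw [hval]
    have h41 : 0 ≤ T1v := by
      rw [hT1v]
      exact integral_nonneg fun x => by positivity
    have h42 : (0:ℝ) ≤ ∫ x : V3, ∫ q : V3,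
        ((∑ j, (pd j (fun w => ψA x w / MA w) q) ^ 2) * MA q
          + (∑ j, (pd j (fun w => ψB x w / MB w) q) ^ 2) * MB q) := by
      refine integral_nonneg fun x => integral_nonneg fun q => ?_
      have := (hMApos q).le
      have := (hMBpos q).le
      have hs1 : (0:ℝ) ≤ ∑ j, (pd j (fun w => ψA x w / MA w) q) ^ 2 :=
        Finset.sum_nonneg fun j _ => sq_nonneg _
      have hs2 : (0:ℝ) ≤ ∑ j, (pd j (fun w => ψB x w / MB w) q) ^ 2 :=
        Finset.sum_nonneg fun j _ => sq_nonneg _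
      exact add_nonneg (mul_nonneg hs1 (hMApos q).le) (mul_nonneg hs2 (hMBpos q).le)
    have h43 : (0:ℝ) ≤ ∫ x : V3, ∫ q : V3, (ψA x q / Real.sqrt (MA q) - 2 * ψB x q) ^ 2 :=
      integral_nonneg fun x => integral_nonneg fun q => sq_nonneg _
    nlinarith [mul_nonneg hlam.le h42, mul_nonneg hlam.le h43]
  exact ⟨hconj1, hder1, hval, hnn⟩
end
end
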